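/- arXiv:0801.4851 — 2 statements merged into one kernel-verified Lean document; each statement's English description precedes it below -/
import Mathlib

section
/- For every integer n ≥ 3 there exists a max game with n players on the n-vertex cycle graph (each player i has strategy set {p_i, p'_i}, where p_i is the single edge e_i of the cycle and p'_i is the complementary path of length n−1 around the cycle) such that the routing in which every player i chooses p_i is a Nash-routing with social cost 1, and the routing in which every player i chooses p'_i is a Nash-routing with social cost n−1. In particular the price of anarchy of this max game is at least n−1. -/
/-! On the cycle `Fin n`, player `i` travels from `i` to `i + 1` either along the edge
`s(i, i + 1)` or around the other `n - 1` edges. If everybody takes its edge, every edge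
carries one player and no path is shorter than one edge, so nobody can improve on cost 1.
If everybody goes around, each edge `s(m, m + 1)` is used by all players but `m`; a player
switching to its own edge would share it with all `n - 1` others, raising its cost to `n`. -/

open Finset

/-- A routing game: a finite set of players `Fin N`, a graph `G` on the finite
vertex type `V`, and for each player a nonempty finite strategy set of paths
(trails of length at least 1) joining its source to its destination. -/
structure RoutingGame (V : Type) [Fintype V] [DecidableEq V] where
  /-- the underlying graph -/
  G : SimpleGraph V
  /-- the number of players -/
  N : ℕ
  Npos : 0 < N
  /-- the source of each player -/
  src : Fin N → V
  /-- the destination of each player -/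
  dst : Fin N → V
  src_ne_dst : ∀ i, src i ≠ dst i
  /-- the strategy set of each player -/
  strat : ∀ i : Fin N, Finset (G.Walk (src i) (dst i))
  strat_nonempty : ∀ i, (strat i).Nonempty
  strat_trail : ∀ i, ∀ q ∈ strat i, q.IsTrail
  strat_len : ∀ i, ∀ q ∈ strat i, 1 ≤ q.length

namespace RoutingGame

variable {V : Type} [Fintype V] [DecidableEq V] (R : RoutingGame V)

/-- A routing assigns to each player a walk from its source to its destination. -/
abbrev Routing := ∀ i : Fin R.N, R.G.Walk (R.src i) (R.dst i)

/-- `p` is a valid routing if every player's path belongs to its strategy set. -/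
def IsRouting (p : R.Routing) : Prop := ∀ i, p i ∈ R.strat i

/-- The edge congestion `C_e(p)`: the number of players whose path uses `e`. -/
def edgeCong (p : R.Routing) (e : Sym2 V) : ℕ :=
  (Finset.univ.filter fun i => e ∈ (p i).edges).card

/-- The path congestion `C_i(p)` of player `i`. -/
def pathCong (p : R.Routing) (i : Fin R.N) : ℕ :=
  (p i).edges.toFinset.sup (R.edgeCong p)

/-- The network congestion `C(p)`. -/
def netCong (p : R.Routing) : ℕ :=
  Finset.univ.sup (R.edgeCong p)

/-- The maximum path length `D(p)`. -/
def maxLen (p : R.Routing) : ℕ :=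
  Finset.univ.sup fun i => (p i).length

/-- The longest path length `L` over all strategy sets. -/
def Lmax : ℕ :=
  Finset.univ.sup fun i : Fin R.N => (R.strat i).sup fun q => q.length

/-- Player cost in the max game: `pc_i(p) = max (C_i(p)) (D_i(p))`. -/
def pcMax (p : R.Routing) (i : Fin R.N) : ℕ :=
  max (R.pathCong p i) (p i).length

/-- Social cost in the max game: `SC(p) = max (C(p)) (D(p))`. -/
def SCMax (p : R.Routing) : ℕ := max (R.netCong p) (R.maxLen p)

/-- A Nash-routing of the max game: a routing in which every player is locally
optimal. -/
def NashMax (p : R.Routing) : Prop :=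
  R.IsRouting p ∧
    ∀ i, ∀ q ∈ R.strat i, R.pcMax p i ≤ R.pcMax (Function.update p i q) i

/-- A greedy move in the max game takes `p` to `p'` by letting a single player
switch to a strictly cheaper path in its strategy set. -/
def GreedyMoveMax (p p' : R.Routing) : Prop :=
  ∃ i, ∃ q ∈ R.strat i,
    p' = Function.update p i q ∧ R.pcMax p' i < R.pcMax p i

/-- The entry `m_k(p)` of the routing vector of the max game: the number of
players with path congestion `k` plus the number of players with path length `k`. -/
def mvecMax (p : R.Routing) (k : ℕ) : ℕ :=
  (Finset.univ.filter fun i => R.pathCong p i = k).card +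
    (Finset.univ.filter fun i => (p i).length = k).card

/-- The strict order on routing vectors (max game): `M(p') < M(p)` iff the
vectors agree above some index `j` and the entry of `p'` at `j` is smaller. -/
def MLtMax (p' p : R.Routing) : Prop :=
  ∃ j : ℕ, (∀ k, j < k → R.mvecMax p' k = R.mvecMax p k) ∧
    R.mvecMax p' j < R.mvecMax p j

theorem edgeCong_le_one {p : R.Routing} {e : Sym2 V}
    (h : ∀ i j, e ∈ (p i).edges → e ∈ (p j).edges → i = j) : R.edgeCong p e ≤ 1 :=
  card_le_one.mpr fun i hi j hj => h i j (mem_filter.mp hi).2 (mem_filter.mp hj).2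

theorem edgeCong_le_N_sub_one {p : R.Routing} {e : Sym2 V} (i : Fin R.N)
    (hi : e ∉ (p i).edges) : R.edgeCong p e ≤ R.N - 1 :=
  calc R.edgeCong p e ≤ (univ.erase i).card :=
        card_le_card fun j hj => mem_erase.mpr
          ⟨fun hji => hi (hji ▸ (mem_filter.mp hj).2), mem_univ j⟩
    _ = R.N - 1 := by simp

theorem edgeCong_eq_N {p : R.Routing} {e : Sym2 V} (h : ∀ i, e ∈ (p i).edges) :
    R.edgeCong p e = R.N := by
  simp [edgeCong, h]

theorem edgeCong_le_pathCong {p : R.Routing} {e : Sym2 V} {i : Fin R.N}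
    (h : e ∈ (p i).edges) : R.edgeCong p e ≤ R.pathCong p i :=
  le_sup (List.mem_toFinset.mpr h)

theorem pcMax_le {p : R.Routing} {i : Fin R.N} {k : ℕ} (hcong : ∀ e, R.edgeCong p e ≤ k)
    (hlen : (p i).length ≤ k) : R.pcMax p i ≤ k :=
  max_le (Finset.sup_le fun e _ => hcong e) hlen

theorem SCMax_eq {p : R.Routing} {k : ℕ} (hcong : ∀ e, R.edgeCong p e ≤ k)
    (hlen : ∀ i, (p i).length = k) : R.SCMax p = k := by
  have : Nonempty (Fin R.N) := ⟨⟨0, R.Npos⟩⟩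
  have hmaxLen : R.maxLen p = k := by simp only [maxLen, hlen]; exact sup_const univ_nonempty k
  rw [SCMax, hmaxLen]
  exact max_eq_right (Finset.sup_le fun e _ => hcong e)

theorem nashMax_of_pcMax_le_one {p : R.Routing} (hp : R.IsRouting p)
    (h : ∀ i, R.pcMax p i ≤ 1) : R.NashMax p :=
  ⟨hp, fun i q hq => (h i).trans <| (R.strat_len i q hq).trans <| by simp [pcMax]⟩

end RoutingGame

open Fin.NatCast Fin.CommRing

theorem Fin.exists_lt_eq_add_one_add_iff {n : ℕ} {a b : Fin (n + 1)} :
    (∃ j < n, b = a + 1 + j) ↔ b ≠ a := by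
  constructor
  · rintro ⟨j, hj, rfl⟩ h
    have hj0 : ((j + 1 : ℕ) : Fin (n + 1)) = 0 := by push_cast; linear_combination h
    have hval := congrArg Fin.val hj0
    rw [Fin.val_cast_of_lt (by omega), Fin.val_zero] at hval
    omega
  · intro hba
    refine ⟨(b - a - 1).val, ?_, by rw [Fin.cast_val_eq_self]; ring⟩
    refine lt_of_le_of_ne (Nat.le_of_lt_succ (b - a - 1).isLt) fun h => hba ?_
    have : b - a - 1 = -1 := Fin.ext (by rw [h, Fin.coe_neg_one])
    linear_combination this

namespace SimpleGraph.cycleGraph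

variable {n : ℕ}

theorem adj_add_one (v : Fin (n + 2)) : (cycleGraph (n + 2)).Adj v (v + 1) := by
  simp [cycleGraph_adj]

def walkUp (v : Fin (n + 2)) : (k : ℕ) → (cycleGraph (n + 2)).Walk v (v + k)
  | 0 => Walk.nil.copy rfl (by simp)
  | k + 1 => ((walkUp v k).concat (adj_add_one _)).copy rfl (by push_cast; ring)

theorem length_walkUp (v : Fin (n + 2)) (k : ℕ) : (walkUp v k).length = k := by
  induction k with
  | zero => simp [walkUp]
  | succ k ih => simp [walkUp, ih]

theorem support_walkUp (v : Fin (n + 2)) (k : ℕ) :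
    (walkUp v k).support = (List.range (k + 1)).map fun j : ℕ => v + j := by
  induction k with
  | zero => simp [walkUp]
  | succ k ih => simp [walkUp, ih, List.range_succ (n := k + 1), add_assoc]

theorem edges_walkUp (v : Fin (n + 2)) (k : ℕ) :
    (walkUp v k).edges = (List.range k).map fun j : ℕ => s(v + j, v + j + 1) := by
  induction k with
  | zero => simp [walkUp]
  | succ k ih => simp [walkUp, ih, List.range_succ]

theorem isPath_walkUp (v : Fin (n + 2)) {k : ℕ} (hk : k < n + 2) : (walkUp v k).IsPath := by
  refine Walk.IsPath.mk' ?_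
  rw [support_walkUp]
  refine List.nodup_range.map_on fun a ha b hb hab => ?_
  rw [List.mem_range] at ha hb
  simpa [Fin.ext_iff, Fin.val_cast_of_lt (by omega : a < n + 2),
    Fin.val_cast_of_lt (by omega : b < n + 2)] using hab

theorem mk_add_one_inj {a b : Fin (n + 3)} : s(a, a + 1) = s(b, b + 1) ↔ a = b := by
  refine ⟨fun h => ?_, fun h => h ▸ rfl⟩
  rcases Sym2.eq_iff.mp h with ⟨hab, -⟩ | ⟨hab, hba⟩
  · exact hab
  · subst hab
    have : (2 : Fin (n + 3)) = 0 := by linear_combination hba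
    simp [Fin.ext_iff, Nat.mod_eq_of_lt (show 2 < n + 3 by omega)] at this

def longArc (i : Fin (n + 3)) : (cycleGraph (n + 3)).Walk i (i + 1) :=
  (walkUp (i + 1) (n + 2)).reverse.copy (by
    have := Fin.natCast_self (n + 3)
    push_cast at this ⊢
    linear_combination this) rfl

theorem length_longArc (i : Fin (n + 3)) : (longArc i).length = n + 2 := by
  simp [longArc, length_walkUp]

theorem isPath_longArc (i : Fin (n + 3)) : (longArc i).IsPath := by
  simpa [longArc] using (isPath_walkUp (i + 1) (by omega : n + 2 < n + 3)).reverse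

theorem mem_edges_longArc {i : Fin (n + 3)} {e : Sym2 (Fin (n + 3))} :
    e ∈ (longArc i).edges ↔ ∃ j < n + 2, e = s(i + 1 + j, i + 1 + j + 1) := by
  simp [longArc, edges_walkUp, eq_comm]

theorem exists_eq_of_mem_edges_longArc {i : Fin (n + 3)} {e : Sym2 (Fin (n + 3))}
    (he : e ∈ (longArc i).edges) : ∃ m, e = s(m, m + 1) := by
  obtain ⟨j, -, rfl⟩ := mem_edges_longArc.mp he
  exact ⟨_, rfl⟩

theorem mk_add_one_mem_edges_longArc {i m : Fin (n + 3)} :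
    s(m, m + 1) ∈ (longArc i).edges ↔ m ≠ i := by
  simp only [mem_edges_longArc, mk_add_one_inj]
  exact Fin.exists_lt_eq_add_one_add_iff

theorem mk_add_one_not_mem_edges_longArc (i : Fin (n + 3)) :
    s(i, i + 1) ∉ (longArc i).edges :=
  mk_add_one_mem_edges_longArc.not.mpr (not_not.mpr rfl)

end SimpleGraph.cycleGraph

namespace RoutingGame

open SimpleGraph SimpleGraph.cycleGraph

-- An `abbrev`, so that `Fin (cycleGame n).N` unfolds to `Fin (n + 3)` for `simp` and numerals.
abbrev cycleGame (n : ℕ) : RoutingGame (Fin (n + 3)) where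
  G := cycleGraph (n + 3)
  N := n + 3
  Npos := by omega
  src i := i
  dst i := i + 1
  src_ne_dst i := (adj_add_one i).ne
  strat i := {(adj_add_one i).toWalk, longArc i}
  strat_nonempty _ := insert_nonempty _ _
  strat_trail i q hq := by
    rcases mem_insert.mp hq with rfl | hq
    · exact (adj_add_one i).isPath_toWalk.isTrail
    · exact mem_singleton.mp hq ▸ (isPath_longArc i).isTrail
  strat_len i q hq := by
    rcases mem_insert.mp hq with rfl | hq
    · simp
    · simp [mem_singleton.mp hq, length_longArc]

def shortRouting (n : ℕ) : (cycleGame n).Routing := fun i => (adj_add_one i).toWalk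

def longRouting (n : ℕ) : (cycleGame n).Routing := longArc

theorem edgeCong_shortRouting_le_one (n : ℕ) (e : Sym2 (Fin (n + 3))) :
    (cycleGame n).edgeCong (shortRouting n) e ≤ 1 :=
  edgeCong_le_one _ fun i j hi hj => by
    simp only [shortRouting, Adj.edges_toWalk, List.mem_singleton] at hi hj
    exact mk_add_one_inj.mp (hi.symm.trans hj)

theorem edgeCong_longRouting_le (n : ℕ) (e : Sym2 (Fin (n + 3))) :
    (cycleGame n).edgeCong (longRouting n) e ≤ n + 2 := by
  by_cases he : e ∈ (longArc 0).edges
  · obtain ⟨m, rfl⟩ := exists_eq_of_mem_edges_longArc he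
    exact edgeCong_le_N_sub_one _ (p := longRouting n) m (mk_add_one_not_mem_edges_longArc m)
  · exact edgeCong_le_N_sub_one _ (p := longRouting n) 0 he

theorem SCMax_shortRouting (n : ℕ) : (cycleGame n).SCMax (shortRouting n) = 1 :=
  SCMax_eq _ (edgeCong_shortRouting_le_one n) fun _ => Adj.length_toWalk _

theorem SCMax_longRouting (n : ℕ) : (cycleGame n).SCMax (longRouting n) = n + 2 :=
  SCMax_eq _ (edgeCong_longRouting_le n) length_longArc

theorem nashMax_shortRouting (n : ℕ) : (cycleGame n).NashMax (shortRouting n) :=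
  nashMax_of_pcMax_le_one _ (fun _ => mem_insert_self _ _) fun _ =>
    pcMax_le _ (edgeCong_shortRouting_le_one n) (Adj.length_toWalk _).le

theorem nashMax_longRouting (n : ℕ) : (cycleGame n).NashMax (longRouting n) := by
  refine ⟨fun _ => mem_insert_of_mem (mem_singleton_self _), fun i q hq => ?_⟩
  have hcost : (cycleGame n).pcMax (longRouting n) i ≤ n + 2 :=
    pcMax_le _ (edgeCong_longRouting_le n) (length_longArc i).le
  rcases mem_insert.mp hq with hq | hq
  · have hall : ∀ j, s(i, i + 1) ∈ (Function.update (longRouting n) i q j).edges := by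
      intro j
      rcases eq_or_ne j i with rfl | hji
      · simp [hq]
      · rw [Function.update_of_ne hji]
        exact mk_add_one_mem_edges_longArc.mpr hji.symm
    calc (cycleGame n).pcMax (longRouting n) i ≤ n + 3 := hcost.trans (by omega)
      _ = (cycleGame n).edgeCong (Function.update (longRouting n) i q) s(i, i + 1) :=
        (edgeCong_eq_N _ hall).symm
      _ ≤ _ := (edgeCong_le_pathCong _ (hall i)).trans (le_max_left _ _)
  · rw [mem_singleton.mp hq, longRouting, Function.update_eq_self]

/-- For every integer `n ≥ 3` there exists a max game with `n`
players on the `n`-vertex cycle graph (each player `i` has strategy set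
`{p_i, p'_i}`, where `p_i` is a single edge `e_i` of the cycle — distinct
players getting distinct edges — and `p'_i` is the complementary path of length
`n − 1` around the cycle) such that the routing in which every player chooses
`p_i` is a Nash-routing with social cost `1`, and the routing in which every
player chooses `p'_i` is a Nash-routing with social cost `n − 1`.  In
particular the price of anarchy of this max game is at least `n − 1`. -/
theorem max_game_poa_lower_bound (n : ℕ) (hn : 3 ≤ n) :
    ∃ R : RoutingGame (Fin n), R.G = SimpleGraph.cycleGraph n ∧ R.N = n ∧
      ∃ pa pb : ∀ i : Fin R.N, R.G.Walk (R.src i) (R.dst i),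
        (∀ i, R.strat i = {pa i, pb i}) ∧
        (∀ i, (pa i).length = 1) ∧
        (∀ i j, i ≠ j → (pa i).edges ≠ (pa j).edges) ∧
        (∀ i, (pb i).length = n - 1) ∧
        (∀ i, Disjoint (pa i).edges.toFinset (pb i).edges.toFinset) ∧
        R.NashMax pa ∧ R.SCMax pa = 1 ∧
        R.NashMax pb ∧ R.SCMax pb = n - 1 ∧
        (n - 1) * R.SCMax pa ≤ R.SCMax pb := by
  obtain ⟨m, rfl⟩ : ∃ m, n = m + 3 := ⟨n - 3, by omega⟩
  refine ⟨cycleGame m, rfl, rfl, shortRouting m, longRouting m, fun _ => rfl,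
    fun _ => Adj.length_toWalk _, fun i j hij => ?_, length_longArc,
    fun i => ?_, nashMax_shortRouting m, SCMax_shortRouting m, nashMax_longRouting m,
    SCMax_longRouting m, by simp [SCMax_shortRouting, SCMax_longRouting]⟩
  · simpa only [shortRouting, Adj.edges_toWalk, ne_eq, List.cons.injEq, and_true,
      mk_add_one_inj] using hij
  · simpa [shortRouting, longRouting] using mk_add_one_not_mem_edges_longArc i

end RoutingGame
end

section
/- There exists an absolute constant c > 0 such that for every sum-bucket game on a graph with n ≥ 2 vertices, every Nash-routing p, and every routing p* (with C̄* = C̄(p*), D̄* = D̄(p*)), the social cost satisfies C̄(p) + D̄(p) ≤ c · C̄* · D̄* · ⌈log₂ n⌉². Equivalently, the price of anarchy of sum-bucket games is O((C̄*·D̄*/(C̄*+D̄*))·log² n). -/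
open Finset

namespace RoutingGame

variable {V : Type} [Fintype V] [DecidableEq V] (R : RoutingGame V)

/-- Player cost in the sum game: `pc_i(p) = C_i(p) + D_i(p)`. -/
def pcSum (p : R.Routing) (i : Fin R.N) : ℕ :=
  R.pathCong p i + (p i).length

/-- For a bucket index `b`, the number of players whose path uses edge `e`
and belongs to bucket `b` (the bucket of a path `q` is `⌊log₂ |q|⌋`). -/
def nCongB (p : R.Routing) (b : ℕ) (e : Sym2 V) : ℕ :=
  (Finset.univ.filter fun j => e ∈ (p j).edges ∧ Nat.log 2 (p j).length = b).card

/-- The normalized congestion `C̄_i(p)` of player `i`: the maximum, over the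
edges of `p_i`, of the congestion caused by paths in the bucket of `p_i`. -/
def nCong (p : R.Routing) (i : Fin R.N) : ℕ :=
  (p i).edges.toFinset.sup (R.nCongB p (Nat.log 2 (p i).length))

/-- The normalized length `D̄_i(p) = 2 ^ (B(p_i) + 1) - 1` of player `i`. -/
def nLen (p : R.Routing) (i : Fin R.N) : ℕ :=
  2 ^ (Nat.log 2 (p i).length + 1) - 1

/-- Player cost in the sum-bucket game: `pc_i(p) = C̄_i(p) + D̄_i(p)`. -/
def pcSB (p : R.Routing) (i : Fin R.N) : ℕ := R.nCong p i + R.nLen p i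

/-- The normalized congestion `C̄(p)` of a routing. -/
def nC (p : R.Routing) : ℕ := Finset.univ.sup (R.nCong p)

/-- The normalized length `D̄(p)` of a routing. -/
def nD (p : R.Routing) : ℕ := Finset.univ.sup (R.nLen p)

/-- The normalized edge congestion `C̄_e(p) = max_i C̄_{e,p_i}(p)`. -/
def nCe (p : R.Routing) (e : Sym2 V) : ℕ :=
  Finset.univ.sup fun i => R.nCongB p (Nat.log 2 (p i).length) e

/-- Social cost in the sum-bucket game: `SC(p) = C̄(p) + D̄(p)`. -/
def SCSB (p : R.Routing) : ℕ := R.nC p + R.nD p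

/-- A Nash-routing of the sum-bucket game: a routing in which every player is
locally optimal. -/
def NashSB (p : R.Routing) : Prop :=
  R.IsRouting p ∧
    ∀ i, ∀ q ∈ R.strat i, R.pcSB p i ≤ R.pcSB (Function.update p i q) i

/-- A greedy move in the sum-bucket game takes `p` to `p'` by letting a single
player switch to a strictly cheaper path in its strategy set. -/
def GreedyMoveSB (p p' : R.Routing) : Prop :=
  ∃ i, ∃ q ∈ R.strat i,
    p' = Function.update p i q ∧ R.pcSB p' i < R.pcSB p i

/-- The entry `m_j(p)` of the routing vector of the sum-bucket game: the number
of players whose cost equals `j`. -/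
def mvecSB (p : R.Routing) (j : ℕ) : ℕ :=
  (Finset.univ.filter fun i => R.pcSB p i = j).card

/-- The strict order on routing vectors (sum-bucket game): `M(p') < M(p)` iff
the vectors agree above some index `j` and the entry of `p'` at `j` is smaller. -/
def MLtSB (p' p : R.Routing) : Prop :=
  ∃ j : ℕ, (∀ k, j < k → R.mvecSB p' k = R.mvecSB p k) ∧
    R.mvecSB p' j < R.mvecSB p j


/-!
Write `C = C̄(p)`, `C* = C̄(p*)`, `δ = D̄(p*) + 2`, and `m = ⌊log₂ |Sym2 V|⌋ + 1 ≤ 2⌈log₂ n⌉ + 1`,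
a strict bound on the bucket of any trail. If player `j` switched to its path in `p*`, each bucket
congestion along it would grow by at most one, so the Nash condition yields an edge of `p*_j`
carrying at least `C̄_j(p) + 2^(B(p_j)+1) - δ` paths of one bucket in `p`. This bounds `D̄(p)` by
`C + δ - 1` and drives an expansion argument for `C`. If every edge of `A` carries at least `γ`
paths of bucket `b`, then at least `γ|A| / 2^(b+1)` players of bucket `b`, each of congestion
`≥ γ`, meet `A`; the `p*`-edges they find carry at least `γ - δ` paths of one bucket each, and
at most `C*` of the players share a `p*`-edge within one bucket of `p*`, so the most popular
bucket provides at least `γ|A| / (2^(b+1) C* m)` such edges. As `2^(b+1) ≤ C - γ + δ`, this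
doubles `A` as long as `γ ≥ 2 C* m (C - γ + δ)`. Starting from one edge of congestion `C`, if
`C ≥ m δ (2 C* m + 1)` there would be `m` doublings, hence more than `|Sym2 V|` edges.
-/

theorem _root_.SimpleGraph.Walk.IsTrail.length_le_card_sym2 {G : SimpleGraph V} {u v : V}
    {q : G.Walk u v} (hq : q.IsTrail) : q.length ≤ Fintype.card (Sym2 V) := by
  rw [← q.length_edges, ← List.toFinset_card_of_nodup hq.edges_nodup]
  exact card_le_univ _

omit [Fintype V] [DecidableEq V] in
theorem _root_.SimpleGraph.Walk.exists_mem_edges {G : SimpleGraph V} {u v : V} (q : G.Walk u v)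
    (hq : 0 < q.length) : ∃ e, e ∈ q.edges :=
  List.exists_mem_of_length_pos (q.length_edges ▸ hq)

omit [DecidableEq V] in
theorem _root_.Sym2.card_le_sq : Fintype.card (Sym2 V) ≤ Fintype.card V ^ 2 := by
  rw [sq, ← Fintype.card_prod]
  exact Fintype.card_le_of_surjective _ Sym2.mk_surjective

omit [DecidableEq V] in
lemma log_card_sym2_le : Nat.log 2 (Fintype.card (Sym2 V)) ≤ 2 * Nat.clog 2 (Fintype.card V) := by
  have hle : Fintype.card (Sym2 V) ≤ 2 ^ (2 * Nat.clog 2 (Fintype.card V)) := by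
    rw [pow_mul']
    exact Sym2.card_le_sq.trans (Nat.pow_le_pow_left (Nat.le_pow_clog one_lt_two _) 2)
  exact (Nat.log_mono_right hle).trans (Nat.log_pow one_lt_two _).le


lemma log_length_lt_of_isRouting {p : R.Routing} (hp : R.IsRouting p) (j : Fin R.N) :
    Nat.log 2 (p j).length < Nat.log 2 (Fintype.card (Sym2 V)) + 1 :=
  Nat.lt_succ_of_le (Nat.log_mono_right (R.strat_trail j _ (hp j)).length_le_card_sym2)

lemma nCongB_le_nCong (p : R.Routing) {j : Fin R.N} {e : Sym2 V} (he : e ∈ (p j).edges) :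
    R.nCongB p (Nat.log 2 (p j).length) e ≤ R.nCong p j :=
  le_sup (List.mem_toFinset.mpr he)

lemma nCongB_le_nC (p : R.Routing) (b : ℕ) (e : Sym2 V) : R.nCongB p b e ≤ R.nC p := by
  obtain h | ⟨j, hj⟩ := (R.nCongB p b e).eq_zero_or_pos.imp id card_pos.mp
  · exact h ▸ Nat.zero_le _
  · obtain ⟨-, hej, rfl⟩ := mem_filter.mp hj
    exact (R.nCongB_le_nCong p hej).trans (le_sup (mem_univ j))

lemma nCongB_update_le (p : R.Routing) (i : Fin R.N) (q : R.G.Walk (R.src i) (R.dst i))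
    (b : ℕ) (e : Sym2 V) : R.nCongB (Function.update p i q) b e ≤ R.nCongB p b e + 1 := by
  refine (card_le_card fun j hj => ?_).trans (card_insert_le i _)
  rcases eq_or_ne j i with rfl | hji
  · exact mem_insert_self _ _
  · simp only [mem_filter, Function.update_of_ne hji] at hj
    exact mem_insert_of_mem (mem_filter.mpr hj)

lemma nC_pos {p : R.Routing} (hp : R.IsRouting p) : 0 < R.nC p := by
  let i : Fin R.N := ⟨0, R.Npos⟩
  obtain ⟨e, he⟩ := (p i).exists_mem_edges (R.strat_len i _ (hp i))
  exact (card_pos.mpr ⟨i, mem_filter.mpr ⟨mem_univ i, he, rfl⟩⟩).trans_le (R.nCongB_le_nC p _ e)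

lemma nD_pos (p : R.Routing) : 0 < R.nD p :=
  (Nat.sub_pos_of_lt (Nat.one_lt_two_pow (Nat.succ_ne_zero _))).trans_le
    (le_sup (f := R.nLen p) (mem_univ ⟨0, R.Npos⟩))

lemma exists_nC_le_nCongB {p : R.Routing} (hp : R.IsRouting p) :
    ∃ b e, R.nC p ≤ R.nCongB p b e := by
  obtain ⟨i, -, hi⟩ := exists_mem_eq_sup univ ⟨⟨0, R.Npos⟩, mem_univ _⟩ (R.nCong p)
  obtain ⟨e₀, he₀⟩ := (p i).exists_mem_edges (R.strat_len i _ (hp i))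
  obtain ⟨e, -, he⟩ := exists_mem_eq_sup _ ⟨e₀, List.mem_toFinset.mpr he₀⟩
    (R.nCongB p (Nat.log 2 (p i).length))
  exact ⟨_, e, (hi.trans he).le⟩

def bucketUsers (p : R.Routing) (b : ℕ) (A : Finset (Sym2 V)) : Finset (Fin R.N) :=
  univ.filter fun j => Nat.log 2 (p j).length = b ∧ ∃ e ∈ A, e ∈ (p j).edges

section

variable {R} {p pstar : R.Routing}

lemma NashSB.exists_pcSB_le (hp : R.NashSB p) {i : Fin R.N} {q : R.G.Walk (R.src i) (R.dst i)}
    (hq : q ∈ R.strat i) :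
    ∃ e ∈ q.edges, R.pcSB p i ≤ R.nCongB p (Nat.log 2 q.length) e + 2 ^ (Nat.log 2 q.length + 1) := by
  obtain ⟨e₀, he₀⟩ := q.exists_mem_edges (R.strat_len i q hq)
  obtain ⟨e, he, hsup⟩ := exists_mem_eq_sup _ ⟨e₀, List.mem_toFinset.mpr he₀⟩
    (R.nCongB (Function.update p i q) (Nat.log 2 q.length))
  refine ⟨e, List.mem_toFinset.mp he, (hp.2 i q hq).trans ?_⟩
  have hupd := R.nCongB_update_le p i q (Nat.log 2 q.length) e
  have hpow := Nat.one_le_two_pow (n := Nat.log 2 q.length + 1)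
  simp only [pcSB, nCong, nLen, Function.update_self] at hsup ⊢
  omega

lemma NashSB.exists_nCong_add_le (hp : R.NashSB p) (hstar : R.IsRouting pstar) (j : Fin R.N) :
    ∃ e ∈ (pstar j).edges, R.nCong p j + 2 ^ (Nat.log 2 (p j).length + 1) ≤
      R.nCongB p (Nat.log 2 (pstar j).length) e + R.nD pstar + 2 := by
  obtain ⟨e, he, hle⟩ := hp.exists_pcSB_le (hstar j)
  refine ⟨e, he, ?_⟩
  have hD : R.nLen pstar j ≤ R.nD pstar := le_sup (mem_univ j)
  have hpow := Nat.one_le_two_pow (n := Nat.log 2 (p j).length + 1)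
  simp only [pcSB, nLen] at hle hD
  omega

lemma NashSB.nD_le (hp : R.NashSB p) (hstar : R.IsRouting pstar) :
    R.nD p ≤ R.nC p + R.nD pstar + 1 := by
  refine Finset.sup_le fun j _ => ?_
  obtain ⟨e, -, hle⟩ := hp.exists_nCong_add_le hstar j
  have := R.nCongB_le_nC p (Nat.log 2 (pstar j).length) e
  simp only [nLen]
  omega

lemma le_nCong_of_mem_bucketUsers {b γ : ℕ} {A : Finset (Sym2 V)}
    (hA : ∀ e ∈ A, γ ≤ R.nCongB p b e) {j : Fin R.N} (hj : j ∈ R.bucketUsers p b A) :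
    γ ≤ R.nCong p j := by
  obtain ⟨-, rfl, e, he, hej⟩ := mem_filter.mp hj
  exact (hA e he).trans (R.nCongB_le_nCong p hej)

lemma card_mul_le_card_bucketUsers_mul {b γ : ℕ} {A : Finset (Sym2 V)}
    (hA : ∀ e ∈ A, γ ≤ R.nCongB p b e) :
    #A * γ ≤ #(R.bucketUsers p b A) * 2 ^ (b + 1) := by
  refine card_mul_le_card_mul (fun e j => e ∈ (p j).edges) (fun e he => (hA e he).trans ?_)
    fun j hj => ?_
  · refine card_le_card fun j hj => ?_
    obtain ⟨-, hej, hb⟩ := mem_filter.mp hj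
    exact mem_filter.mpr ⟨mem_filter.mpr ⟨mem_univ j, hb, e, he, hej⟩, hej⟩
  · obtain ⟨-, hb, -⟩ := mem_filter.mp hj
    calc #(A.bipartiteBelow (fun e j => e ∈ (p j).edges) j)
        ≤ #(p j).edges.toFinset := card_le_card fun e he => List.mem_toFinset.mpr (mem_filter.mp he).2
      _ ≤ (p j).length := (List.toFinset_card_le _).trans (p j).length_edges.le
      _ ≤ 2 ^ (b + 1) := hb ▸ (Nat.lt_pow_succ_log_self one_lt_two _).le

lemma card_le_nC_mul_card_image {b : ℕ} {P : Finset (Fin R.N)}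
    {g : Fin R.N → Sym2 V}
    (hg : ∀ j ∈ P, g j ∈ (pstar j).edges ∧ Nat.log 2 (pstar j).length = b) :
    #P ≤ R.nC pstar * #(P.image g) := by
  refine card_le_mul_card_image P _ fun e _ => le_trans ?_ (R.nCongB_le_nC pstar b e)
  refine card_le_card fun j hj => ?_
  obtain ⟨hjP, rfl⟩ := mem_filter.mp hj
  exact mem_filter.mpr ⟨mem_univ j, hg j hjP⟩

lemma bucketUsers_nonempty {b γ : ℕ} {A : Finset (Sym2 V)} (hA : A.Nonempty) (hγ : 0 < γ)
    (hγA : ∀ e ∈ A, γ ≤ R.nCongB p b e) : (R.bucketUsers p b A).Nonempty := by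
  obtain ⟨e, he⟩ := hA
  obtain ⟨j, hj⟩ := card_pos.mp (hγ.trans_le (hγA e he))
  obtain ⟨-, hej, hb⟩ := mem_filter.mp hj
  exact ⟨j, mem_filter.mpr ⟨mem_univ j, hb, e, he, hej⟩⟩

lemma NashSB.two_pow_le_of_mem_bucketUsers (hp : R.NashSB p) (hstar : R.IsRouting pstar)
    {b γ : ℕ} {A : Finset (Sym2 V)} (hγA : ∀ e ∈ A, γ ≤ R.nCongB p b e) {j : Fin R.N}
    (hj : j ∈ R.bucketUsers p b A) : 2 ^ (b + 1) ≤ R.nC p - γ + R.nD pstar + 2 := by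
  obtain ⟨e, -, hle⟩ := hp.exists_nCong_add_le hstar j
  have := R.nCongB_le_nC p (Nat.log 2 (pstar j).length) e
  have := le_nCong_of_mem_bucketUsers hγA hj
  rw [(mem_filter.mp hj).2.1] at hle
  omega

theorem NashSB.exists_expansion (hp : R.NashSB p) (hstar : R.IsRouting pstar) {m : ℕ}
    (hm : ∀ j, Nat.log 2 (pstar j).length < m) {b γ : ℕ} {A : Finset (Sym2 V)}
    (hA : A.Nonempty) (hγA : ∀ e ∈ A, γ ≤ R.nCongB p b e)
    (hγ : 2 * R.nC pstar * m * (R.nC p - γ + R.nD pstar + 2) ≤ γ) :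
    ∃ b' A', 2 * #A ≤ #A' ∧ ∀ e ∈ A', γ - (R.nD pstar + 2) ≤ R.nCongB p b' e := by
  set P := R.bucketUsers p b A
  choose g hg_mem hg_le using hp.exists_nCong_add_le hstar
  have hm_pos : 0 < m := (Nat.zero_le _).trans_lt (hm ⟨0, R.Npos⟩)
  have hγ_pos : 0 < γ := lt_of_lt_of_le (by have := R.nC_pos hstar; positivity) hγ
  obtain ⟨j₀, hj₀⟩ := bucketUsers_nonempty hA hγ_pos hγA
  have hwidth := hp.two_pow_le_of_mem_bucketUsers hstar hγA hj₀
  obtain ⟨b', -, hb'⟩ := (range m).exists_max_image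
    (fun b' => #{j ∈ P | Nat.log 2 (pstar j).length = b'}) (nonempty_range_iff.mpr hm_pos.ne')
  set P' := P.filter fun j => Nat.log 2 (pstar j).length = b'
  have hPP' : #P ≤ #P' * m := by
    simpa using card_le_mul_card_image_of_maps_to (fun j _ => mem_range.mpr (hm j)) _ hb'
  have hP'A' : #P' ≤ R.nC pstar * #(P'.image g) :=
    card_le_nC_mul_card_image fun j hj => ⟨hg_mem j, (mem_filter.mp hj).2⟩
  refine ⟨b', P'.image g, ?_, ?_⟩
  · set w := R.nC pstar * m * 2 ^ (b + 1)
    have hw : 0 < w := by have := R.nC_pos hstar; positivity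
    refine Nat.le_of_mul_le_mul_right ?_ hw
    calc 2 * #A * w = #A * (2 * R.nC pstar * m * 2 ^ (b + 1)) := by ring
      _ ≤ #A * γ := Nat.mul_le_mul_left _ ((Nat.mul_le_mul_left _ hwidth).trans hγ)
      _ ≤ #P * 2 ^ (b + 1) := card_mul_le_card_bucketUsers_mul hγA
      _ ≤ R.nC pstar * #(P'.image g) * m * 2 ^ (b + 1) := by gcongr; exact hPP'.trans (by gcongr)
      _ = #(P'.image g) * w := by ring
  · intro e he
    obtain ⟨j, hj, rfl⟩ := mem_image.mp he
    obtain ⟨hjP, rfl⟩ := mem_filter.mp hj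
    have := hg_le j
    have := le_nCong_of_mem_bucketUsers hγA hjP
    have := Nat.one_le_two_pow (n := Nat.log 2 (p j).length + 1)
    omega

theorem NashSB.exists_congested_edges (hp : R.NashSB p) (hstar : R.IsRouting pstar) {m K : ℕ}
    (hm : ∀ j, Nat.log 2 (pstar j).length < m)
    (hK : K * (R.nD pstar + 2) * (2 * R.nC pstar * m + 1) ≤ R.nC p) {k : ℕ} (hk : k ≤ K) :
    ∃ b A, 2 ^ k ≤ #A ∧ ∀ e ∈ A, R.nC p - k * (R.nD pstar + 2) ≤ R.nCongB p b e := by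
  induction k with
  | zero =>
    obtain ⟨b, e, he⟩ := R.exists_nC_le_nCongB hp.1
    exact ⟨b, {e}, by simp, by simpa using he⟩
  | succ k ih =>
    obtain ⟨b, A, hcard, hA⟩ := ih (by omega)
    set δ := R.nD pstar + 2
    have hK' : (k + 1) * δ * (2 * R.nC pstar * m + 1) ≤ R.nC p := le_trans (by gcongr) hK
    have hexpand : (k + 1) * δ * (2 * R.nC pstar * m + 1) =
        2 * R.nC pstar * m * (k * δ + δ) + k * δ + δ := by ring
    have hγ : 2 * R.nC pstar * m * (R.nC p - (R.nC p - k * δ) + δ) ≤ R.nC p - k * δ := by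
      rw [Nat.sub_sub_self (by omega)]
      omega
    obtain ⟨b', A', hcard', hA'⟩ :=
      hp.exists_expansion hstar hm (card_pos.mp (hcard.trans_lt' (by positivity))) hA hγ
    refine ⟨b', A', by rw [pow_succ]; omega, fun e he => ?_⟩
    rw [add_one_mul, ← Nat.sub_sub]
    exact hA' e he

theorem NashSB.nC_lt (hp : R.NashSB p) (hstar : R.IsRouting pstar) {m : ℕ}
    (hm : ∀ j, Nat.log 2 (pstar j).length < m) (hcard : Fintype.card (Sym2 V) < 2 ^ m) :
    R.nC p < m * (R.nD pstar + 2) * (2 * R.nC pstar * m + 1) := by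
  by_contra! hC
  obtain ⟨-, A, hA, -⟩ := hp.exists_congested_edges hstar hm hC le_rfl
  exact (hcard.trans_le (hA.trans (card_le_univ A))).false

end

/-- There exists an absolute constant `c > 0` such that for every
sum-bucket game on a graph with `n ≥ 2` vertices, every Nash-routing `p`, and
every routing `p*`, the social cost satisfies
`C̄(p) + D̄(p) ≤ c · C̄(p*) · D̄(p*) · ⌈log₂ n⌉²`.  Equivalently, the price of
anarchy of sum-bucket games is `O((C̄*·D̄*/(C̄*+D̄*))·log² n)`. -/
theorem sum_bucket_price_of_anarchy :
    ∃ c : ℕ, 0 < c ∧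
      ∀ (V : Type) [Fintype V] [DecidableEq V] (R : RoutingGame V)
        (p pstar : R.Routing), 2 ≤ Fintype.card V →
        R.NashSB p → R.IsRouting pstar →
        R.SCSB p ≤ c * R.nC pstar * R.nD pstar *
          (Nat.clog 2 (Fintype.card V)) ^ 2 := by
  refine ⟨127, by norm_num, fun V _ _ R p pstar hn hp hstar => ?_⟩
  set lam := Nat.clog 2 (Fintype.card V)
  set m := Nat.log 2 (Fintype.card (Sym2 V)) + 1
  have hlam : 1 ≤ lam := Nat.clog_pos one_lt_two hn
  have hm : m ≤ 3 * lam := by have := log_card_sym2_le (V := V); omega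
  have hCs := R.nC_pos hstar
  have hDs := R.nD_pos pstar
  have hC : R.nC p < m * (R.nD pstar + 2) * (2 * R.nC pstar * m + 1) :=
    hp.nC_lt hstar (R.log_length_lt_of_isRouting hstar) (Nat.lt_pow_succ_log_self one_lt_two _)
  have hbound : m * (R.nD pstar + 2) * (2 * R.nC pstar * m + 1) ≤
      63 * (R.nC pstar * R.nD pstar * lam ^ 2) :=
    calc _ ≤ 3 * lam * (3 * R.nD pstar) * (2 * R.nC pstar * (3 * lam) + R.nC pstar * lam) := by
          gcongr <;> nlinarith
      _ = 63 * (R.nC pstar * R.nD pstar * lam ^ 2) := by ring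
  have hD := hp.nD_le hstar
  have hDs_le : R.nD pstar ≤ R.nC pstar * R.nD pstar * lam ^ 2 :=
    (Nat.le_mul_of_pos_left _ (by positivity : 0 < R.nC pstar * lam ^ 2)).trans_eq (by ring)
  rw [SCSB]
  linarith

end RoutingGame
end
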